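/- arXiv:math-ph/0601063 — 3 statements merged into one kernel-verified Lean document; each statement's English description precedes it below -/
import Mathlib

section
/- Let 1 ≤ p < ∞. For even n, taking d = n/2 in the map T(A) = |0⟩⟨0| tr(PA) + |1⟩⟨1| tr((𝟙−P)A) (P a rank-d projection) and A = P − (d/(n−d))(𝟙−P), one gets ‖T(A)‖_p = (n/2)^{1-1/p} ‖A‖_p; for odd n, taking d = (n+1)/2 one gets ‖T(A)‖_p = (2^{2-p}/((n-1)^{1-p}+(n+1)^{1-p}))^{1/p} ‖A‖_p. Hence the bounds of Theorem 4 on the traceless Hermitian hyperplane are attained by a completely positive trace preserving map. -/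
open scoped ENNReal ComplexOrder

/-- The singular values of a complex square matrix `A`, i.e. the (square roots of the)
eigenvalues of `Aᴴ * A`. -/
noncomputable def singularValues {n : ℕ} (A : Matrix (Fin n) (Fin n) ℂ) : Fin n → ℝ :=
  fun i => Real.sqrt ((Matrix.posSemidef_conjTranspose_mul_self A).isHermitian.eigenvalues i)

/-- The Schatten `p`-norm `‖A‖_p = (tr |A|^p)^{1/p}`; for `p = ∞` it is the operator
(largest singular value) norm. -/
noncomputable def schattenNorm {n : ℕ} (p : ℝ≥0∞) (A : Matrix (Fin n) (Fin n) ℂ) : ℝ :=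
  if p = ⊤ then ⨆ i, singularValues A i
  else (∑ i, singularValues A i ^ p.toReal) ^ (1 / p.toReal)

/-- A linear map between matrix algebras is positive if it maps positive semi-definite
matrices to positive semi-definite matrices. -/
def IsPositiveMatrixMap {n r : ℕ} (T : Matrix (Fin n) (Fin n) ℂ →ₗ[ℂ] Matrix (Fin r) (Fin r) ℂ) :
    Prop :=
  ∀ A : Matrix (Fin n) (Fin n) ℂ, A.PosSemidef → (T A).PosSemidef

/-- A linear map between matrix algebras is trace preserving if `tr T(A) = tr A` for all `A`. -/
def IsTracePreservingMap {n r : ℕ}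
    (T : Matrix (Fin n) (Fin n) ℂ →ₗ[ℂ] Matrix (Fin r) (Fin r) ℂ) : Prop :=
  ∀ A : Matrix (Fin n) (Fin n) ℂ, (T A).trace = A.trace

/-! Both matrices have a two-valued modulus: `Aᴴ A = P + c² (𝟙 - P)` with `c = d / (n - d)`, and
`T(A) = d (|0⟩⟨0| - |1⟩⟨1|)`, so `T(A)ᴴ T(A) = d² (|0⟩⟨0| + |1⟩⟨1|)`. A Hermitian matrix of the form
`a Q + b (𝟙 - Q)` with `Q` idempotent is annihilated by `(X - a)(X - b)`, so its eigenvalues lie in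
`{a, b}`, and its trace `a tr Q + b (n - tr Q)` fixes their multiplicities. Hence
`‖A‖_p^p = d + (n - d) c^p` and `‖T(A)‖_p^p = 2 d^p`, and the ratio is real arithmetic in the two
parity cases. -/

open Matrix

namespace Matrix.IsHermitian

variable {𝕜 n : Type*} [RCLike 𝕜] [Fintype n] [DecidableEq n] {M : Matrix n n 𝕜}

theorem eigenvalues_eq_or_eq_of_mul_eq_zero (hM : M.IsHermitian) {a b : ℝ}
    (h : (M - (a : 𝕜) • 1) * (M - (b : 𝕜) • 1) = 0) (i : n) :
    hM.eigenvalues i = a ∨ hM.eigenvalues i = b := by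
  set v : n → 𝕜 := ⇑(hM.eigenvectorBasis i)
  have hv : v ≠ 0 := (WithLp.ofLp_eq_zero 2).ne.2 (hM.eigenvectorBasis.orthonormal.ne_zero i)
  have hMv : M *ᵥ v = (hM.eigenvalues i : 𝕜) • v := by
    rw [hM.mulVec_eigenvectorBasis i, RCLike.real_smul_eq_coe_smul (K := 𝕜)]
  have hprod : (((hM.eigenvalues i : 𝕜) - a) * ((hM.eigenvalues i : 𝕜) - b)) • v = 0 := by
    rw [← zero_mulVec v, ← h, ← mulVec_mulVec]
    simp only [sub_mulVec, smul_mulVec, one_mulVec, mulVec_sub, mulVec_smul, hMv]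
    module
  rcases mul_eq_zero.mp ((smul_eq_zero.mp hprod).resolve_right hv) with h | h
  · exact .inl (RCLike.ofReal_injective (sub_eq_zero.mp h))
  · exact .inr (RCLike.ofReal_injective (sub_eq_zero.mp h))

theorem sum_eigenvalues_of_trace_eq (hM : M.IsHermitian) {t : ℝ} (ht : M.trace = t) :
    ∑ i, hM.eigenvalues i = t := by
  exact_mod_cast hM.trace_eq_sum_eigenvalues.symm.trans ht

theorem sum_comp_eigenvalues_of_eq_smul_add_smul_one_sub (hM : M.IsHermitian)
    {Q : Matrix n n 𝕜} (hQ : IsIdempotentElem Q) {r : ℝ} (hr : Q.trace = r) {a b : ℝ}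
    (hMQ : M = (a : 𝕜) • Q + (b : 𝕜) • (1 - Q)) (f : ℝ → ℝ) :
    ∑ i, f (hM.eigenvalues i) = r * f a + (Fintype.card n - r) * f b := by
  have hvals : ∀ i, hM.eigenvalues i = a ∨ hM.eigenvalues i = b := by
    refine hM.eigenvalues_eq_or_eq_of_mul_eq_zero ?_
    have hsub : ∀ c : 𝕜, M - c • 1 = ((a : 𝕜) - c) • Q + ((b : 𝕜) - c) • (1 - Q) := by
      intro c; rw [hMQ]; module
    rw [hsub, hsub, sub_self, sub_self, zero_smul, zero_smul, add_zero, zero_add,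
      smul_mul_smul_comm, hQ.one_sub_mul_self, smul_zero]
  have hsum : ∑ i, hM.eigenvalues i = r * a + (Fintype.card n - r) * b := by
    refine hM.sum_eigenvalues_of_trace_eq ?_
    rw [hMQ, trace_add, trace_smul, trace_smul, trace_sub, trace_one, hr]
    simp only [smul_eq_mul]
    push_cast
    ring
  -- `f` agrees on `{a, b}` with the affine function `x ↦ f b + β (x - b)`
  set β := (f a - f b) / (a - b)
  have hf : ∀ i, f (hM.eigenvalues i) = f b + β * (hM.eigenvalues i - b) := by
    intro i
    rcases hvals i with h | h <;> rw [h]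
    · rcases eq_or_ne a b with rfl | hab
      · simp
      · simp only [β]; field_simp [sub_ne_zero.mpr hab]; ring
    · simp
  rw [Finset.sum_congr rfl fun i _ => hf i, Finset.sum_add_distrib, ← Finset.mul_sum,
    Finset.sum_sub_distrib, hsum]
  rcases eq_or_ne a b with rfl | hab
  · simp only [Finset.sum_const, Finset.card_univ, nsmul_eq_mul]; ring
  · simp only [Finset.sum_const, Finset.card_univ, nsmul_eq_mul, β]
    field_simp [sub_ne_zero.mpr hab]
    ring

end Matrix.IsHermitian

theorem IsIdempotentElem.smul_add_smul_one_sub_mul {S R : Type*} [CommSemiring S] [Ring R]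
    [Algebra S R] {e : R} (he : IsIdempotentElem e) (s t s' t' : S) :
    (s • e + t • (1 - e)) * (s' • e + t' • (1 - e)) = (s * s') • e + (t * t') • (1 - e) := by
  simp only [add_mul, mul_add, smul_mul_smul_comm, he.eq, he.one_sub.eq, he.mul_one_sub_self,
    he.one_sub_mul_self, smul_zero, add_zero, zero_add]

theorem IsIdempotentElem.trace_mul_sub_smul_one_sub {n R : Type*} [Fintype n] [DecidableEq n]
    [CommRing R] {P : Matrix n n R} (hP : IsIdempotentElem P) (c : R) :
    (P * (P - c • (1 - P))).trace = P.trace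
      ∧ ((1 - P) * (P - c • (1 - P))).trace = -(c * (Fintype.card n - P.trace)) := by
  constructor
  · rw [mul_sub, mul_smul_comm, hP.mul_one_sub_self, smul_zero, sub_zero, hP.eq]
  · rw [mul_sub, mul_smul_comm, hP.one_sub_mul_self, hP.one_sub.eq, zero_sub, trace_neg,
      trace_smul, trace_sub, trace_one, smul_eq_mul]

theorem schattenNorm_ofReal_of_conjTranspose_mul_self_eq {n : ℕ} {A Q : Matrix (Fin n) (Fin n) ℂ}
    (hQ : IsIdempotentElem Q) {r : ℝ} (hr : Q.trace = r) {s t : ℝ}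
    (hAQ : Aᴴ * A = ((s ^ 2 : ℝ) : ℂ) • Q + ((t ^ 2 : ℝ) : ℂ) • (1 - Q)) {p : ℝ} (hp : 0 ≤ p) :
    schattenNorm (ENNReal.ofReal p) A = (r * |s| ^ p + (n - r) * |t| ^ p) ^ (1 / p) := by
  rw [schattenNorm, if_neg ENNReal.ofReal_ne_top, ENNReal.toReal_ofReal hp]
  have hsum := IsHermitian.sum_comp_eigenvalues_of_eq_smul_add_smul_one_sub
    (posSemidef_conjTranspose_mul_self A).isHermitian hQ hr (a := s ^ 2) (b := t ^ 2) hAQ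
    (fun x => √x ^ p)
  rw [Real.sqrt_sq_eq_abs, Real.sqrt_sq_eq_abs, Fintype.card_fin] at hsum
  exact congrArg (· ^ (1 / p)) hsum

theorem schattenNorm_ofReal_sub_smul_one_sub {n : ℕ} {P : Matrix (Fin n) (Fin n) ℂ}
    (hP : P.IsHermitian) (hproj : IsIdempotentElem P) {r : ℝ} (hr : P.trace = r) (c : ℝ) {p : ℝ}
    (hp : 0 ≤ p) :
    schattenNorm (ENNReal.ofReal p) (P - (c : ℂ) • (1 - P))
      = (r + (n - r) * |c| ^ p) ^ (1 / p) := by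
  have hform : P - (c : ℂ) • (1 - P) = ((1 : ℝ) : ℂ) • P + ((-c : ℝ) : ℂ) • (1 - P) := by
    push_cast; module
  have hself : (P - (c : ℂ) • (1 - P))ᴴ = P - (c : ℂ) • (1 - P) := by
    simp [conjTranspose_sub, conjTranspose_smul, hP.eq]
  rw [schattenNorm_ofReal_of_conjTranspose_mul_self_eq hproj hr (s := 1) (t := -c) _ hp]
  · simp
  · rw [hself, hform, hproj.smul_add_smul_one_sub_mul]
    push_cast; ring_nf

theorem schattenNorm_ofReal_smul_single_sub_single {n : ℕ} {i j : Fin n} (hij : i ≠ j) (c : ℝ)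
    {p : ℝ} (hp : 0 < p) :
    schattenNorm (ENNReal.ofReal p) ((c : ℂ) • (single i i 1 - single j j 1))
      = (2 * |c| ^ p) ^ (1 / p) := by
  set Q : Matrix (Fin n) (Fin n) ℂ := single i i 1 + single j j 1
  have hii : single i i (1 : ℂ) * single i i 1 = single i i 1 := by simp
  have hjj : single j j (1 : ℂ) * single j j 1 = single j j 1 := by simp
  have hij' : single i i (1 : ℂ) * single j j 1 = 0 := single_mul_single_of_ne _ _ _ _ hij _
  have hji' : single j j (1 : ℂ) * single i i 1 = 0 := single_mul_single_of_ne _ _ _ _ hij.symm _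
  have hQ : IsIdempotentElem Q := by
    simp only [IsIdempotentElem, Q, add_mul, mul_add, hii, hjj, hij', hji', add_zero, zero_add]
  have hQtr : Q.trace = ((2 : ℝ) : ℂ) := by
    simp only [Q, trace_add, trace_single_eq_same]; norm_num
  rw [schattenNorm_ofReal_of_conjTranspose_mul_self_eq hQ hQtr (s := c) (t := 0) _ hp.le]
  · simp [Real.zero_rpow hp.ne']
  · have hsq : (single i i (1 : ℂ) - single j j 1) * (single i i 1 - single j j 1) = Q := by
      simp only [Q, sub_mul, mul_sub, hii, hjj, hij', hji']
      abel
    simp only [conjTranspose_smul, conjTranspose_sub, conjTranspose_single, star_one,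
      Complex.star_def, Complex.conj_ofReal, smul_mul_smul_comm, hsq]
    push_cast
    simp [sq]

theorem Real.rpow_one_div_eq_mul_rpow_one_div {x C S p : ℝ} (hp : p ≠ 0) (hC : 0 ≤ C)
    (hS : 0 ≤ S) (h : x = C ^ p * S) : x ^ (1 / p) = C * S ^ (1 / p) := by
  rw [h, Real.mul_rpow (by positivity) hS, ← Real.rpow_mul hC, mul_one_div_cancel hp,
    Real.rpow_one]

theorem two_mul_rpow_eq_rpow_mul_of_even {k p : ℝ} (hk : 0 < k) (hp : p ≠ 0) :
    2 * k ^ p = ((2 * k / 2) ^ (1 - 1 / p)) ^ p * (k + (2 * k - k) * (k / (2 * k - k)) ^ p) := by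
  have h2k : 2 * k - k = k := by ring
  rw [h2k, mul_div_cancel_left₀ _ two_ne_zero, div_self hk.ne', Real.one_rpow,
    ← Real.rpow_mul hk.le, sub_mul, one_div_mul_cancel hp, one_mul, Real.rpow_sub_one hk.ne']
  field_simp
  ring

theorem two_mul_rpow_eq_rpow_mul_of_odd {k p : ℝ} (hk : 0 < k) (hp : p ≠ 0) :
    2 * (k + 1) ^ p
      = (((2 : ℝ) ^ (2 - p) / ((2 * k + 1 - 1) ^ (1 - p) + (2 * k + 1 + 1) ^ (1 - p)))
          ^ (1 / p)) ^ p
        * ((k + 1) + (2 * k + 1 - (k + 1)) * ((k + 1) / (2 * k + 1 - (k + 1))) ^ p) := by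
  have hl : 0 < k + 1 := by linarith
  have e1 : 2 * k + 1 - 1 = 2 * k := by ring
  have e2 : 2 * k + 1 + 1 = 2 * (k + 1) := by ring
  have e3 : 2 * k + 1 - (k + 1) = k := by ring
  rw [e1, e2, e3, ← Real.rpow_mul (by positivity), one_div_mul_cancel hp, Real.rpow_one,
    Real.mul_rpow zero_le_two hk.le, Real.mul_rpow zero_le_two hl.le, Real.div_rpow hl.le hk.le,
    Real.rpow_sub two_pos, Real.rpow_sub two_pos, Real.rpow_sub hk, Real.rpow_sub hl, Real.rpow_one,
    Real.rpow_one, Real.rpow_one, Real.rpow_two]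
  have : 0 < k ^ p := Real.rpow_pos_of_pos hk p
  have : 0 < (k + 1) ^ p := Real.rpow_pos_of_pos hl p
  have : 0 < (2 : ℝ) ^ p := Real.rpow_pos_of_pos two_pos p
  field_simp
  ring

theorem lt_of_eq_ite_even {n d : ℕ} (hn : 2 ≤ n)
    (hd : d = if Even n then n / 2 else (n + 1) / 2) : d < n := by
  split_ifs at hd <;> omega

theorem traceless_bound_mul_rpow_one_div_eq {n d : ℕ} (hn : 2 ≤ n)
    (hd : d = if Even n then n / 2 else (n + 1) / 2) {p : ℝ} (hp : 0 < p) :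
    (if Even n then ((n : ℝ) / 2) ^ (1 - 1 / p)
        else ((2 : ℝ) ^ (2 - p) / (((n : ℝ) - 1) ^ (1 - p) + ((n : ℝ) + 1) ^ (1 - p))) ^ (1 / p))
      * (d + (n - d) * (d / (n - d)) ^ p) ^ (1 / p) = (2 * d ^ p) ^ (1 / p) := by
  have hnd : (0 : ℝ) < n - d := sub_pos.mpr (by exact_mod_cast lt_of_eq_ite_even hn hd)
  have hC : 0 ≤ if Even n then ((n : ℝ) / 2) ^ (1 - 1 / p)
      else ((2 : ℝ) ^ (2 - p) / (((n : ℝ) - 1) ^ (1 - p) + ((n : ℝ) + 1) ^ (1 - p))) ^ (1 / p) := by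
    have : (0 : ℝ) ≤ n - 1 := by linarith [(Nat.ofNat_le_cast (α := ℝ)).mpr hn]
    split_ifs <;> positivity
  refine (Real.rpow_one_div_eq_mul_rpow_one_div hp.ne' hC
    (add_nonneg (by positivity) (mul_nonneg hnd.le (by positivity))) ?_).symm
  rcases Nat.even_or_odd' n with ⟨k, rfl | rfl⟩
  · obtain rfl : k = d := by rw [hd, if_pos (even_two_mul k)]; omega
    simpa using two_mul_rpow_eq_rpow_mul_of_even (k := k) (by norm_cast; omega) hp.ne'
  · obtain rfl : d = k + 1 := by rw [hd, if_neg (Nat.not_even_bit1 k)]; omega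
    simpa using two_mul_rpow_eq_rpow_mul_of_odd (k := k) (by norm_cast; omega) hp.ne'

/-- The bounds of Theorem 4 on the traceless Hermitian hyperplane are attained by the
completely positive trace preserving map `T(A) = |0⟩⟨0| tr(PA) + |1⟩⟨1| tr((𝟙−P)A)`:
taking a projection `P` of rank `d = n/2` for even `n` (resp. `d = (n+1)/2` for odd `n`)
and `A = P − (d/(n−d))(𝟙−P)`, one gets `‖T(A)‖_p = (n/2)^{1-1/p} ‖A‖_p` (resp.
`‖T(A)‖_p = (2^{2-p}/((n-1)^{1-p}+(n+1)^{1-p}))^{1/p} ‖A‖_p`), for `1 ≤ p < ∞`. -/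
theorem schattenNorm_traceless_bound_attained
    (n : ℕ) (hn : 2 ≤ n) (p : ℝ) (hp : 1 ≤ p)
    (d : ℕ) (hd : d = if Even n then n / 2 else (n + 1) / 2)
    (P : Matrix (Fin n) (Fin n) ℂ) (hP : P.IsHermitian) (hproj : P * P = P)
    (htr : P.trace = (d : ℂ))
    (A : Matrix (Fin n) (Fin n) ℂ)
    (hA : A = P - ((d : ℂ) / ((n : ℂ) - (d : ℂ))) • (1 - P))
    (TA : Matrix (Fin n) (Fin n) ℂ)
    (hTA : TA = (P * A).trace • Matrix.single (⟨0, by omega⟩ : Fin n) ⟨0, by omega⟩ 1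
        + ((1 - P) * A).trace • Matrix.single (⟨1, by omega⟩ : Fin n) ⟨1, by omega⟩ 1) :
    schattenNorm (ENNReal.ofReal p) TA
      = (if Even n then ((n : ℝ) / 2) ^ (1 - 1 / p)
          else ((2 : ℝ) ^ (2 - p) / (((n : ℝ) - 1) ^ (1 - p) + ((n : ℝ) + 1) ^ (1 - p))) ^ (1 / p))
        * schattenNorm (ENNReal.ofReal p) A := by
  have hp0 : 0 < p := by linarith
  have hnd : (0 : ℝ) < n - d := sub_pos.mpr (by exact_mod_cast lt_of_eq_ite_even hn hd)
  have hproj : IsIdempotentElem P := hproj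
  set c : ℝ := d / (n - d)
  have hc : (d : ℂ) / ((n : ℂ) - (d : ℂ)) = (c : ℂ) := by push_cast [c]; rfl
  have hcd : (c : ℂ) * (n - d) = d := by
    rw [← hc]; exact div_mul_cancel₀ _ (by exact_mod_cast hnd.ne')
  rw [hc] at hA
  obtain ⟨htrPA, htrQA⟩ := hproj.trace_mul_sub_smul_one_sub (c : ℂ)
  rw [← hA, htr] at htrPA htrQA
  rw [htrPA, htrQA, Fintype.card_fin, hcd, neg_smul, ← sub_eq_add_neg, ← smul_sub,
    ← Complex.ofReal_natCast] at hTA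
  rw [hTA, hA, schattenNorm_ofReal_smul_single_sub_single (by simp [Fin.ext_iff]) _ hp0,
    schattenNorm_ofReal_sub_smul_one_sub hP hproj (r := d) (by rw [htr]; norm_cast) c hp0.le,
    abs_of_nonneg (by positivity), abs_of_nonneg (by positivity),
    traceless_bound_mul_rpow_one_div_eq hn hd hp0]
end

section
/- Let T : M_2(ℂ) → M_2(ℂ) be a positive trace preserving linear map and 1 ≤ p ≤ ∞. Then for every A ∈ M_2(ℂ) with tr A = 0 (A not assumed Hermitian), ‖T(A)‖_p ≤ ‖A‖_p. -/
open scoped ENNReal ComplexOrder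

/-!
Let `s₀, s₁` be the singular values of a traceless `A ∈ M₂(ℂ)`, so that `s₀² + s₁² = ‖A‖₂²` and
`s₀ s₁ = |det A|`. For `|c| = 1` the Hermitian part of `cA` satisfies
`2‖ℜ(cA)‖₂² = ‖A‖₂² - 2 Re(c² det A)`, which sweeps out `[(s₀ - s₁)², (s₀ + s₁)²]`.
A positive map commutes with `ℜ`, and a trace-preserving one contracts `‖·‖₂` on traceless
Hermitian `2 × 2` matrices: such an `H` is `P - Q` with `P, Q ≥ 0` of trace `‖H‖₂ / √2`, while
`‖R - S‖₂² ≤ (tr R)² + (tr S)²` for all `R, S ≥ 0`. The rotation maximizing `‖ℜ(c T(A))‖₂` shows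
that `s₀ + s₁` decreases. Comparing the rotations `c` and `ic` that extremize `‖ℜ(cA)‖₂`, whose
squared norms have a fixed sum, concavity of `√` shows that `max(s₀, s₁)` decreases. Since
`t ↦ tᵖ` is convex and increasing, this weak majorization bounds every Schatten norm.
-/

open Matrix ComplexStarModule
open scoped Matrix.Norms.Frobenius MatrixOrder ComplexConjugate

lemma iSup_fin_two {α : Type*} [ConditionallyCompleteLinearOrder α] (f : Fin 2 → α) :
    ⨆ i, f i = max (f 0) (f 1) :=
  le_antisymm (ciSup_le fun i => by fin_cases i <;> simp)
    (max_le (le_ciSup (Set.finite_range f).bddAbove 0) (le_ciSup (Set.finite_range f).bddAbove 1))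

lemma ConvexOn.map_add_map_le_of_mem_Icc {s : Set ℝ} {f : ℝ → ℝ} (hf : ConvexOn ℝ s f)
    {a b x : ℝ} (ha : a ∈ s) (hb : b ∈ s) (hx : x ∈ Set.Icc b a) :
    f x + f (a + b - x) ≤ f a + f b := by
  rw [← segment_eq_Icc (hx.1.trans hx.2)] at hx
  obtain ⟨θ, φ, hθ, hφ, hθφ, rfl⟩ := hx
  have hy : a + b - (θ • b + φ • a) = θ • a + φ • b := by
    simp only [smul_eq_mul]; linear_combination (-(a + b)) * hθφ
  have h₁ := hf.2 hb ha hθ hφ hθφ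
  have h₂ := hf.2 ha hb hθ hφ hθφ
  rw [hy]
  simp only [smul_eq_mul] at h₁ h₂ ⊢
  linear_combination h₁ + h₂ + (f a + f b) * hθφ

/-- Tomić–Weyl inequality for two points, i.e. for `(c, d)` weakly majorized by `(a, b)`. -/
lemma ConvexOn.map_add_map_le_of_max_le_of_add_le {f : ℝ → ℝ} (hf : ConvexOn ℝ (Set.Ici 0) f)
    (hmono : MonotoneOn f (Set.Ici 0)) {a b c d : ℝ} (ha : 0 ≤ a) (hb : 0 ≤ b) (hc : 0 ≤ c)
    (hd : 0 ≤ d) (hmax : max c d ≤ max a b) (hsum : c + d ≤ a + b) :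
    f c + f d ≤ f a + f b := by
  wlog hba : b ≤ a generalizing a b
  · rw [add_comm (f a)]
    exact this hb ha (max_comm a b ▸ hmax) (by linarith) (by linarith)
  wlog hdc : d ≤ c generalizing c d
  · rw [add_comm (f c)]
    exact this hd hc (max_comm c d ▸ hmax) (by linarith) (by linarith)
  rw [max_eq_left hba, max_eq_left hdc] at hmax
  rcases le_or_gt d b with hdb | hbd
  · exact add_le_add (hmono hc ha hmax) (hmono hd hb hdb)
  · calc f c + f d ≤ f c + f (a + b - c) := by
          gcongr; exact hmono hd (Set.mem_Ici.mpr (by linarith)) (by linarith)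
      _ ≤ f a + f b := hf.map_add_map_le_of_mem_Icc ha hb ⟨by linarith, hmax⟩

lemma Real.sqrt_add_sqrt_le_sqrt_add_sqrt {u v x y : ℝ} (hv : 0 ≤ v) (hx : 0 ≤ x) (hy : 0 ≤ y)
    (hsum : u + v = x + y) (hspread : |x - y| ≤ u - v) : √u + √v ≤ √x + √y := by
  have hu : 0 ≤ u := by linarith [abs_nonneg (x - y)]
  have hprod : u * v ≤ x * y := by
    nlinarith [sq_abs (x - y), abs_nonneg (x - y)]
  have key : √u * √v ≤ √x * √y := by
    rw [← Real.sqrt_mul hu, ← Real.sqrt_mul hx]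
    exact Real.sqrt_le_sqrt hprod
  refine (sq_le_sq₀ (by positivity) (by positivity)).mp ?_
  rw [add_sq, add_sq, Real.sq_sqrt hu, Real.sq_sqrt hv, Real.sq_sqrt hx, Real.sq_sqrt hy]
  linarith

lemma Complex.exists_norm_eq_one_sq_mul_eq_norm (z : ℂ) :
    ∃ c : ℂ, ‖c‖ = 1 ∧ c ^ 2 * z = ‖z‖ := by
  rcases eq_or_ne z 0 with rfl | hz
  · exact ⟨1, by simp⟩
  obtain ⟨c, hc⟩ := IsAlgClosed.exists_pow_nat_eq ((‖z‖ : ℂ) / z) two_pos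
  refine ⟨c, ?_, by rw [hc, div_mul_cancel₀ _ hz]⟩
  have : ‖c‖ ^ 2 = 1 := by
    rw [← norm_pow, hc, norm_div, Complex.norm_real, norm_norm, div_self (norm_ne_zero_iff.mpr hz)]
  exact (pow_eq_one_iff_of_nonneg (norm_nonneg c) two_ne_zero).mp this

lemma Complex.abs_re_sq_mul_le_norm {c : ℂ} (hc : ‖c‖ = 1) (z : ℂ) : |(c ^ 2 * z).re| ≤ ‖z‖ := by
  have h := abs_re_le_norm (c ^ 2 * z)
  rwa [norm_mul, norm_pow, hc, one_pow, one_mul] at h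

namespace Matrix

variable {m n : Type*} [Fintype m] [Fintype n]

lemma frobenius_norm_sq_eq_sum (A : Matrix m n ℂ) : ‖A‖ ^ 2 = ∑ i, ∑ j, ‖A i j‖ ^ 2 := by
  rw [frobenius_norm_def, ← Real.rpow_natCast, ← Real.rpow_mul (by positivity)]
  norm_num

lemma trace_conjTranspose_mul_self_eq_frobenius_norm_sq (A : Matrix m n ℂ) :
    (Aᴴ * A).trace = ((‖A‖ ^ 2 : ℝ) : ℂ) := by
  rw [frobenius_norm_sq_eq_sum, Finset.sum_comm]
  simp [trace, mul_apply, Complex.conj_mul']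

lemma frobenius_norm_sq_eq_re_trace (A : Matrix m n ℂ) : ‖A‖ ^ 2 = (Aᴴ * A).trace.re := by
  rw [trace_conjTranspose_mul_self_eq_frobenius_norm_sq, Complex.ofReal_re]

lemma trace_realPart (A : Matrix n n ℂ) : (ℜ A : Matrix n n ℂ).trace = A.trace.re := by
  rw [realPart_apply_coe, trace_smul, trace_add, star_eq_conjTranspose, trace_conjTranspose,
    Complex.star_def, Complex.add_conj]
  simp

lemma two_mul_frobenius_norm_sq_realPart (A : Matrix n n ℂ) :
    2 * ‖(ℜ A : Matrix n n ℂ)‖ ^ 2 = ‖A‖ ^ 2 + (A * A).trace.re := by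
  have hsa : (ℜ A : Matrix n n ℂ)ᴴ = ℜ A := (ℜ A).2
  have h1 : (Aᴴ * Aᴴ).trace = conj (A * A).trace := by
    rw [← conjTranspose_mul, trace_conjTranspose, Complex.star_def]
  have h2 : (A * Aᴴ).trace = (Aᴴ * A).trace := trace_mul_comm _ _
  apply Complex.ofReal_injective
  rw [Complex.ofReal_mul, Complex.ofReal_add, Complex.ofReal_ofNat,
    ← trace_conjTranspose_mul_self_eq_frobenius_norm_sq,
    ← trace_conjTranspose_mul_self_eq_frobenius_norm_sq, Complex.re_eq_add_conj, hsa,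
    realPart_apply_coe, star_eq_conjTranspose, ← Complex.coe_smul]
  simp only [smul_add, add_mul, mul_add, smul_mul_smul_comm, trace_add, trace_smul, h1, h2,
    smul_eq_mul]
  push_cast
  ring

lemma trace_mul_self_fin_two_of_trace_eq_zero {A : Matrix (Fin 2) (Fin 2) ℂ} (h : A.trace = 0) :
    (A * A).trace = -2 * A.det := by
  rw [trace_fin_two] at h
  rw [trace_fin_two, det_fin_two, mul_apply, mul_apply, Fin.sum_univ_two, Fin.sum_univ_two,
    eq_neg_of_add_eq_zero_right h]
  ring

lemma mul_self_fin_two_of_trace_eq_zero {A : Matrix (Fin 2) (Fin 2) ℂ} (h : A.trace = 0) :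
    A * A = -A.det • 1 := by
  rw [trace_fin_two] at h
  have h11 := eq_neg_of_add_eq_zero_right h
  ext i j
  fin_cases i <;> fin_cases j <;> simp [mul_apply, det_fin_two, h11] <;> ring

lemma two_mul_frobenius_norm_sq_realPart_smul {A : Matrix (Fin 2) (Fin 2) ℂ} (hA : A.trace = 0)
    {c : ℂ} (hc : ‖c‖ = 1) :
    2 * ‖(ℜ (c • A) : Matrix (Fin 2) (Fin 2) ℂ)‖ ^ 2 = ‖A‖ ^ 2 - 2 * (c ^ 2 * A.det).re := by
  rw [two_mul_frobenius_norm_sq_realPart, norm_smul, hc, one_mul,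
    trace_mul_self_fin_two_of_trace_eq_zero (by rw [trace_smul, hA, smul_zero]), det_smul,
    Fintype.card_fin]
  simp only [neg_mul, Complex.neg_re, Complex.mul_re, Complex.re_ofNat, Complex.im_ofNat,
    zero_mul, sub_zero]
  ring

lemma two_mul_frobenius_norm_sq_realPart_I_mul_smul {A : Matrix (Fin 2) (Fin 2) ℂ}
    (hA : A.trace = 0) {c : ℂ} (hc : ‖c‖ = 1) :
    2 * ‖(ℜ ((Complex.I * c) • A) : Matrix (Fin 2) (Fin 2) ℂ)‖ ^ 2 =
      ‖A‖ ^ 2 + 2 * (c ^ 2 * A.det).re := by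
  rw [two_mul_frobenius_norm_sq_realPart_smul hA (by rw [norm_mul, Complex.norm_I, hc, one_mul]),
    mul_pow, Complex.I_sq, neg_one_mul, neg_mul, Complex.neg_re]
  ring

lemma posSemidef_of_mul_self_eq_smul {P : Matrix n n ℂ} (hP : P.IsHermitian) {r : ℝ} (hr : 0 ≤ r)
    (h : P * P = (r : ℂ) • P) : P.PosSemidef := by
  have hPP : Pᴴ * P = (r : ℂ) • P := by rw [hP.eq, h]
  rcases hr.eq_or_lt with rfl | hr
  · have : P = 0 := by
      rw [← trace_conjTranspose_mul_self_eq_zero_iff, hPP]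
      simp
    exact this ▸ PosSemidef.zero
  · have : P = r⁻¹ • (Pᴴ * P) := by
      rw [hPP, ← Complex.coe_smul, smul_smul, ← Complex.ofReal_mul, inv_mul_cancel₀ hr.ne',
        Complex.ofReal_one, one_smul]
    rw [this]
    exact (posSemidef_conjTranspose_mul_self P).smul (inv_nonneg.mpr hr.le)

lemma IsHermitian.posSemidef_smul_one_add [DecidableEq n] {K : Matrix n n ℂ} (hK : K.IsHermitian)
    {r : ℝ} (hr : 0 ≤ r) (hKK : K * K = ((r ^ 2 : ℝ) : ℂ) • 1) :
    ((r : ℂ) • 1 + K).PosSemidef := by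
  refine posSemidef_of_mul_self_eq_smul ((isHermitian_one.smul (by simp [IsSelfAdjoint])).add hK)
    (by positivity : 0 ≤ 2 * r) ?_
  simp only [add_mul, mul_add, smul_mul_assoc, mul_smul_comm, one_mul, mul_one, hKK]
  push_cast
  module

lemma IsHermitian.exists_posSemidef_sub_fin_two {H : Matrix (Fin 2) (Fin 2) ℂ}
    (hH : H.IsHermitian) (htr : H.trace = 0) :
    ∃ P Q : Matrix (Fin 2) (Fin 2) ℂ, P.PosSemidef ∧ Q.PosSemidef ∧ H = P - Q ∧
      P.trace.re ^ 2 + Q.trace.re ^ 2 = ‖H‖ ^ 2 := by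
  set r : ℝ := ‖H‖ / √2
  have hr : 0 ≤ r := by positivity
  have hr2 : 2 * r ^ 2 = ‖H‖ ^ 2 := by
    rw [div_pow, Real.sq_sqrt zero_le_two]; ring
  have hHH : H * H = ((r ^ 2 : ℝ) : ℂ) • 1 := by
    have hF := trace_conjTranspose_mul_self_eq_frobenius_norm_sq H
    rw [hH.eq, trace_mul_self_fin_two_of_trace_eq_zero htr, ← hr2] at hF
    rw [mul_self_fin_two_of_trace_eq_zero htr]
    congr 1
    push_cast at hF ⊢
    linear_combination hF / 2
  -- `(r ± H) / 2` are `r` times the spectral projections of `H`.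
  have half : (0 : ℂ) ≤ 2⁻¹ := by rw [Complex.le_def]; norm_num
  have trace_half {K : Matrix (Fin 2) (Fin 2) ℂ} (hK : K.trace = 0) :
      ((2 : ℂ)⁻¹ • ((r : ℂ) • 1 + K)).trace = r := by
    rw [trace_smul, trace_add, trace_smul, trace_one, hK, Fintype.card_fin]
    simp only [smul_eq_mul, add_zero, Nat.cast_ofNat]
    ring
  refine ⟨(2 : ℂ)⁻¹ • ((r : ℂ) • 1 + H), (2 : ℂ)⁻¹ • ((r : ℂ) • 1 + -H),
    (hH.posSemidef_smul_one_add hr hHH).smul half,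
    (hH.neg.posSemidef_smul_one_add hr (by rwa [neg_mul_neg])).smul half, by module, ?_⟩
  rw [trace_half htr, trace_half (by rw [trace_neg, htr, neg_zero]), Complex.ofReal_re, ← hr2]
  ring

namespace PosSemidef

lemma trace_mul_nonneg {R S : Matrix n n ℂ} (hR : R.PosSemidef) (hS : S.PosSemidef) :
    0 ≤ (R * S).trace := by
  classical
  obtain ⟨B, rfl⟩ := CStarAlgebra.nonneg_iff_eq_star_mul_self.mp hR.nonneg
  rw [star_eq_conjTranspose, mul_assoc, trace_mul_comm]
  simpa [mul_assoc] using (hS.mul_mul_conjTranspose_same B).trace_nonneg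

lemma trace_mul_self_le_sq {R : Matrix n n ℂ} (hR : R.PosSemidef) :
    (R * R).trace ≤ R.trace ^ 2 := by
  have minor (i j : n) : R i j * R j i ≤ R i i * R j j := by
    have := (hR.submatrix ![i, j]).det_nonneg
    rw [det_fin_two] at this
    simpa [sub_nonneg, mul_comm] using this
  rw [sq, trace, trace, Finset.sum_mul_sum]
  exact Finset.sum_le_sum fun i _ => by
    simp only [diag, mul_apply]; exact Finset.sum_le_sum fun j _ => minor i j

lemma frobenius_norm_sub_sq_le {R S : Matrix n n ℂ} (hR : R.PosSemidef) (hS : S.PosSemidef) :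
    ‖R - S‖ ^ 2 ≤ R.trace.re ^ 2 + S.trace.re ^ 2 := by
  have hRR := (Complex.le_def.mp hR.trace_mul_self_le_sq).1
  have hSS := (Complex.le_def.mp hS.trace_mul_self_le_sq).1
  have hRS := (Complex.le_def.mp (hR.trace_mul_nonneg hS)).1
  have hRim := (Complex.le_def.mp hR.trace_nonneg).2
  have hSim := (Complex.le_def.mp hS.trace_nonneg).2
  rw [frobenius_norm_sq_eq_re_trace, conjTranspose_sub, hR.1.eq, hS.1.eq, sub_mul, mul_sub,
    mul_sub, trace_sub, trace_sub, trace_sub, trace_mul_comm S R]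
  simp only [sq, Complex.mul_re, Complex.sub_re, Complex.zero_re, Complex.zero_im] at *
  nlinarith

end PosSemidef

end Matrix

section SingularValues

variable {n : ℕ}

lemma singularValues_nonneg (A : Matrix (Fin n) (Fin n) ℂ) (i : Fin n) : 0 ≤ singularValues A i :=
  Real.sqrt_nonneg _

lemma sum_singularValues_sq (A : Matrix (Fin n) (Fin n) ℂ) :
    ∑ i, singularValues A i ^ 2 = ‖A‖ ^ 2 := by
  have h := posSemidef_conjTranspose_mul_self A
  have := h.isHermitian.trace_eq_sum_eigenvalues
  rw [trace_conjTranspose_mul_self_eq_frobenius_norm_sq] at this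
  simp only [singularValues, Real.sq_sqrt (h.eigenvalues_nonneg _)]
  exact Complex.ofReal_injective (by simpa using this.symm)

lemma prod_singularValues (A : Matrix (Fin n) (Fin n) ℂ) :
    ∏ i, singularValues A i = ‖A.det‖ := by
  have h := posSemidef_conjTranspose_mul_self A
  have hdet := h.isHermitian.det_eq_prod_eigenvalues
  rw [det_mul, det_conjTranspose, Complex.star_def, Complex.conj_mul'] at hdet
  unfold singularValues
  rw [← Real.sqrt_prod _ fun i _ => h.eigenvalues_nonneg i, ← Real.sqrt_sq (norm_nonneg A.det)]
  congr 1
  exact Complex.ofReal_injective (by simpa using hdet.symm)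

lemma add_singularValues_sq (A : Matrix (Fin 2) (Fin 2) ℂ) :
    (singularValues A 0 + singularValues A 1) ^ 2 = ‖A‖ ^ 2 + 2 * ‖A.det‖ := by
  rw [← sum_singularValues_sq, ← prod_singularValues, Fin.sum_univ_two, Fin.prod_univ_two]
  ring

lemma sub_singularValues_sq (A : Matrix (Fin 2) (Fin 2) ℂ) :
    (singularValues A 0 - singularValues A 1) ^ 2 = ‖A‖ ^ 2 - 2 * ‖A.det‖ := by
  rw [← sum_singularValues_sq, ← prod_singularValues, Fin.sum_univ_two, Fin.prod_univ_two]
  ring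

lemma two_mul_max_singularValues (A : Matrix (Fin 2) (Fin 2) ℂ) :
    2 * max (singularValues A 0) (singularValues A 1) =
      √(‖A‖ ^ 2 + 2 * ‖A.det‖) + √(‖A‖ ^ 2 - 2 * ‖A.det‖) := by
  rw [← add_singularValues_sq, ← sub_singularValues_sq,
    Real.sqrt_sq (add_nonneg (singularValues_nonneg A 0) (singularValues_nonneg A 1)),
    Real.sqrt_sq_eq_abs, abs_sub_comm, two_mul, ← two_nsmul, two_nsmul_sup_eq_add_add_abs_sub]

end SingularValues

namespace IsPositiveMatrixMap

section

variable {n r : ℕ} {T : Matrix (Fin n) (Fin n) ℂ →ₗ[ℂ] Matrix (Fin r) (Fin r) ℂ}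

lemma map_isHermitian (hT : IsPositiveMatrixMap T) {H : Matrix (Fin n) (Fin n) ℂ}
    (hH : H.IsHermitian) : (T H).IsHermitian := by
  obtain ⟨P, Q, hP, hQ, rfl⟩ := hH.isSelfAdjoint.exists_nonneg_sub_nonneg
  rw [map_sub]
  exact (hT P hP.posSemidef).1.sub (hT Q hQ.posSemidef).1

lemma map_conjTranspose (hT : IsPositiveMatrixMap T) (A : Matrix (Fin n) (Fin n) ℂ) :
    T Aᴴ = (T A)ᴴ := by
  have hH : (ℜ A : Matrix (Fin n) (Fin n) ℂ).IsHermitian := (ℜ A).2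
  have hK : (ℑ A : Matrix (Fin n) (Fin n) ℂ).IsHermitian := (ℑ A).2
  rw [← realPart_add_I_smul_imaginaryPart A]
  simp only [map_add, map_smul, conjTranspose_add, conjTranspose_smul, hH.eq, hK.eq,
    (hT.map_isHermitian hH).eq, (hT.map_isHermitian hK).eq]

lemma map_realPart (hT : IsPositiveMatrixMap T) (A : Matrix (Fin n) (Fin n) ℂ) :
    T (ℜ A) = ℜ (T A) := by
  rw [realPart_apply_coe, realPart_apply_coe, LinearMap.map_smul_of_tower, map_add,
    star_eq_conjTranspose, star_eq_conjTranspose, hT.map_conjTranspose]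

end

variable {T : Matrix (Fin 2) (Fin 2) ℂ →ₗ[ℂ] Matrix (Fin 2) (Fin 2) ℂ}

lemma norm_map_le_of_isHermitian (hT : IsPositiveMatrixMap T) (hTtr : IsTracePreservingMap T)
    {H : Matrix (Fin 2) (Fin 2) ℂ} (hH : H.IsHermitian)
    (htr : H.trace = 0) : ‖T H‖ ≤ ‖H‖ := by
  obtain ⟨P, Q, hP, hQ, rfl, hPQ⟩ := hH.exists_posSemidef_sub_fin_two htr
  have := (hT P hP).frobenius_norm_sub_sq_le (hT Q hQ)
  rw [← map_sub, hTtr, hTtr, hPQ] at this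
  exact (sq_le_sq₀ (norm_nonneg _) (norm_nonneg _)).mp this

lemma norm_realPart_smul_map_le (hT : IsPositiveMatrixMap T) (hTtr : IsTracePreservingMap T)
    {A : Matrix (Fin 2) (Fin 2) ℂ} (hA : A.trace = 0) (c : ℂ) :
    ‖(ℜ (c • T A) : Matrix (Fin 2) (Fin 2) ℂ)‖ ≤ ‖(ℜ (c • A) : Matrix (Fin 2) (Fin 2) ℂ)‖ := by
  rw [← map_smul, ← hT.map_realPart]
  exact hT.norm_map_le_of_isHermitian hTtr (ℜ (c • A)).2
    (by rw [trace_realPart, trace_smul, hA, smul_zero, Complex.zero_re, Complex.ofReal_zero])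

lemma add_singularValues_map_le (hT : IsPositiveMatrixMap T) (hTtr : IsTracePreservingMap T)
    {A : Matrix (Fin 2) (Fin 2) ℂ} (hA : A.trace = 0) :
    singularValues (T A) 0 + singularValues (T A) 1 ≤ singularValues A 0 + singularValues A 1 := by
  refine (sq_le_sq₀ (add_nonneg (singularValues_nonneg _ 0) (singularValues_nonneg _ 1))
    (add_nonneg (singularValues_nonneg _ 0) (singularValues_nonneg _ 1))).mp ?_
  rw [add_singularValues_sq, add_singularValues_sq]
  obtain ⟨c, hc, hcB⟩ := Complex.exists_norm_eq_one_sq_mul_eq_norm (T A).det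
  have hB : (T A).trace = 0 := by rw [hTtr, hA]
  calc ‖T A‖ ^ 2 + 2 * ‖(T A).det‖
      = 2 * ‖(ℜ ((Complex.I * c) • T A) : Matrix (Fin 2) (Fin 2) ℂ)‖ ^ 2 := by
        rw [two_mul_frobenius_norm_sq_realPart_I_mul_smul hB hc, hcB, Complex.ofReal_re]
    _ ≤ 2 * ‖(ℜ ((Complex.I * c) • A) : Matrix (Fin 2) (Fin 2) ℂ)‖ ^ 2 := by
        gcongr; exact hT.norm_realPart_smul_map_le hTtr hA _
    _ ≤ ‖A‖ ^ 2 + 2 * ‖A.det‖ := by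
        rw [two_mul_frobenius_norm_sq_realPart_I_mul_smul hA hc]
        linarith [(abs_le.mp (Complex.abs_re_sq_mul_le_norm hc A.det)).2]

lemma max_singularValues_map_le (hT : IsPositiveMatrixMap T) (hTtr : IsTracePreservingMap T)
    {A : Matrix (Fin 2) (Fin 2) ℂ} (hA : A.trace = 0) :
    max (singularValues (T A) 0) (singularValues (T A) 1) ≤
      max (singularValues A 0) (singularValues A 1) := by
  obtain ⟨c, hc, hcA⟩ := Complex.exists_norm_eq_one_sq_mul_eq_norm A.det
  have hB : (T A).trace = 0 := by rw [hTtr, hA]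
  have hD := abs_le.mp (Complex.abs_re_sq_mul_le_norm hc (T A).det)
  have hF : 0 ≤ ‖T A‖ ^ 2 - 2 * ‖(T A).det‖ := sub_singularValues_sq (T A) ▸ sq_nonneg _
  refine le_of_mul_le_mul_left ?_ two_pos
  rw [two_mul_max_singularValues, two_mul_max_singularValues]
  calc √(‖T A‖ ^ 2 + 2 * ‖(T A).det‖) + √(‖T A‖ ^ 2 - 2 * ‖(T A).det‖)
      ≤ √(2 * ‖(ℜ ((Complex.I * c) • T A) : Matrix (Fin 2) (Fin 2) ℂ)‖ ^ 2) +
          √(2 * ‖(ℜ (c • T A) : Matrix (Fin 2) (Fin 2) ℂ)‖ ^ 2) := by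
        apply Real.sqrt_add_sqrt_le_sqrt_add_sqrt hF (by positivity) (by positivity)
        all_goals rw [two_mul_frobenius_norm_sq_realPart_I_mul_smul hB hc,
          two_mul_frobenius_norm_sq_realPart_smul hB hc]
        · ring
        · rw [abs_le]; constructor <;> linarith
    _ ≤ √(2 * ‖(ℜ ((Complex.I * c) • A) : Matrix (Fin 2) (Fin 2) ℂ)‖ ^ 2) +
          √(2 * ‖(ℜ (c • A) : Matrix (Fin 2) (Fin 2) ℂ)‖ ^ 2) := by
        gcongr <;> exact hT.norm_realPart_smul_map_le hTtr hA _
    _ = √(‖A‖ ^ 2 + 2 * ‖A.det‖) + √(‖A‖ ^ 2 - 2 * ‖A.det‖) := by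
        rw [two_mul_frobenius_norm_sq_realPart_I_mul_smul hA hc,
          two_mul_frobenius_norm_sq_realPart_smul hA hc, hcA, Complex.ofReal_re]

end IsPositiveMatrixMap

/-- **Qubit case.** For any positive trace preserving `T : M_2(ℂ) → M_2(ℂ)`, any
`1 ≤ p ≤ ∞` and any (not necessarily Hermitian) traceless `A ∈ M_2(ℂ)`,
`‖T(A)‖_p ≤ ‖A‖_p`. -/
theorem qubit_traceless_contractive
    (T : Matrix (Fin 2) (Fin 2) ℂ →ₗ[ℂ] Matrix (Fin 2) (Fin 2) ℂ)
    (hTpos : IsPositiveMatrixMap T) (hTtr : IsTracePreservingMap T)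
    (p : ℝ≥0∞) (hp : 1 ≤ p)
    (A : Matrix (Fin 2) (Fin 2) ℂ) (hA0 : A.trace = 0) :
    schattenNorm p (T A) ≤ schattenNorm p A := by
  have hsum := hTpos.add_singularValues_map_le hTtr hA0
  have hmax := hTpos.max_singularValues_map_le hTtr hA0
  rcases eq_or_ne p ⊤ with rfl | hp_top
  · simpa only [schattenNorm, if_pos, iSup_fin_two] using hmax
  · have hq : 1 ≤ p.toReal := by
      simpa using ENNReal.toReal_mono hp_top hp
    simp only [schattenNorm, if_neg hp_top, Fin.sum_univ_two]
    refine Real.rpow_le_rpow (add_nonneg (Real.rpow_nonneg (singularValues_nonneg _ 0) _)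
      (Real.rpow_nonneg (singularValues_nonneg _ 1) _)) ?_ (by positivity)
    exact (convexOn_rpow hq).map_add_map_le_of_max_le_of_add_le
      (fun x hx y _ hxy => Real.rpow_le_rpow hx hxy (by linarith))
      (singularValues_nonneg _ 0) (singularValues_nonneg _ 1) (singularValues_nonneg _ 0)
      (singularValues_nonneg _ 1) hmax hsum
end

section
/- Let T : M_3(ℂ) → M_3(ℂ) be a positive trace preserving linear map. Then for every Hermitian A ∈ M_3(ℂ) with tr A = 0, ‖T(A)‖_∞ ≤ ‖A‖_∞ (contractivity on the traceless Hermitian hyperplane holds for qutrits at p = ∞). -/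
open scoped ENNReal ComplexOrder

/-!
Split `A = A⁺ - A⁻` into its positive and negative parts; as `tr A = 0`, both have trace
`t = ∑ λᵢ⁺`. Then `T A⁺` and `T A⁻` are positive with trace `t`, so `0 ≤ T A^± ≤ t`, whence
`-t ≤ T A ≤ t` and `‖T A‖_∞ ≤ t`. Of three eigenvalues summing to zero, either at most one is
positive, or exactly one is negative and `t` is its absolute value; either way `t ≤ ‖A‖_∞`.
-/

open Matrix
open scoped MatrixOrder

namespace Matrix

section
variable {n 𝕜 : Type*} [Fintype n] [DecidableEq n] [RCLike 𝕜]

lemma IsHermitian.trace_cfc {A : Matrix n n 𝕜} (hA : A.IsHermitian) (f : ℝ → ℝ) :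
    (cfc f A).trace = ∑ i, (f (hA.eigenvalues i) : 𝕜) := by
  rw [hA.cfc_eq, IsHermitian.cfc, Unitary.conjStarAlgAut_apply, trace_mul_cycle,
    Unitary.coe_star_mul_self, one_mul, trace_diagonal]
  rfl

lemma IsHermitian.trace_posPart {A : Matrix n n 𝕜} (hA : A.IsHermitian) :
    A⁺.trace = ((∑ i, (hA.eigenvalues i)⁺ : ℝ) : 𝕜) := by
  rw [CFC.posPart_def, cfcₙ_eq_cfc, hA.trace_cfc, RCLike.ofReal_sum]

lemma le_algebraMap_of_trace_eq {M : Matrix n n 𝕜} (hM : 0 ≤ M) {t : ℝ} (ht : M.trace = t) :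
    M ≤ algebraMap ℝ _ t := by
  have hH := hM.posSemidef.isHermitian
  have hsum : ∑ i, hH.eigenvalues i = t := by
    exact_mod_cast hH.trace_eq_sum_eigenvalues.symm.trans ht
  rw [le_algebraMap_iff_spectrum_le hH.isSelfAdjoint, hH.spectrum_real_eq_range_eigenvalues]
  rintro _ ⟨i, rfl⟩
  exact hsum ▸ Finset.single_le_sum (fun j _ => hM.posSemidef.eigenvalues_nonneg j)
    (Finset.mem_univ i)

end

lemma IsHermitian.range_singularValues {n : ℕ} {A : Matrix (Fin n) (Fin n) ℂ}
    (hA : A.IsHermitian) :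
    Set.range (singularValues A) = Set.range fun i => |hA.eigenvalues i| := by
  have hAA := (posSemidef_conjTranspose_mul_self A).isHermitian
  have hspec : spectrum ℝ (Aᴴ * A) = (· ^ 2) '' Set.range hA.eigenvalues := by
    rw [hA.eq, ← sq, ← cfc_pow_id (R := ℝ) A 2 hA.isSelfAdjoint,
      cfc_map_spectrum _ _ hA.isSelfAdjoint, hA.spectrum_real_eq_range_eigenvalues]
  have hsv : singularValues A = Real.sqrt ∘ hAA.eigenvalues := rfl
  rw [hsv, Set.range_comp, ← hAA.spectrum_real_eq_range_eigenvalues, hspec, Set.image_image,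
    ← Set.range_comp]
  simp only [Function.comp_def, Real.sqrt_sq_eq_abs]

lemma IsHermitian.schattenNorm_top_eq {n : ℕ} {A : Matrix (Fin n) (Fin n) ℂ}
    (hA : A.IsHermitian) : schattenNorm ⊤ A = ⨆ i, |hA.eigenvalues i| := by
  rw [schattenNorm, if_pos rfl, iSup, iSup, hA.range_singularValues]

lemma IsHermitian.schattenNorm_top_le {n : ℕ} {A : Matrix (Fin n) (Fin n) ℂ}
    (hA : A.IsHermitian) {t : ℝ} (ht : 0 ≤ t) (hlo : algebraMap ℝ _ (-t) ≤ A)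
    (hhi : A ≤ algebraMap ℝ _ t) : schattenNorm ⊤ A ≤ t := by
  rw [algebraMap_le_iff_le_spectrum hA.isSelfAdjoint, hA.spectrum_real_eq_range_eigenvalues]
    at hlo
  rw [le_algebraMap_iff_spectrum_le hA.isSelfAdjoint, hA.spectrum_real_eq_range_eigenvalues]
    at hhi
  rw [hA.schattenNorm_top_eq]
  exact Real.iSup_le (fun i => abs_le.2 ⟨hlo _ ⟨i, rfl⟩, hhi _ ⟨i, rfl⟩⟩) ht

end Matrix

lemma schattenNorm_top_sub_le_of_trace_eq {n : ℕ} {P Q : Matrix (Fin n) (Fin n) ℂ}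
    (hP : 0 ≤ P) (hQ : 0 ≤ Q) {t : ℝ} (hPt : P.trace = t) (hQt : Q.trace = t) :
    schattenNorm ⊤ (P - Q) ≤ t := by
  have ht : 0 ≤ t := by exact_mod_cast hPt ▸ hP.posSemidef.trace_nonneg
  refine (hP.posSemidef.isHermitian.sub hQ.posSemidef.isHermitian).schattenNorm_top_le ht ?_ ?_
  · calc algebraMap ℝ _ (-t) = -algebraMap ℝ _ t := map_neg _ _
      _ ≤ -Q := neg_le_neg (le_algebraMap_of_trace_eq hQ hQt)
      _ ≤ P - Q := by simpa using hP
  · calc P - Q ≤ P := sub_le_self P hQ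
      _ ≤ algebraMap ℝ _ t := le_algebraMap_of_trace_eq hP hPt

theorem schattenNorm_top_map_le_sum_posPart {n r : ℕ}
    {T : Matrix (Fin n) (Fin n) ℂ →ₗ[ℂ] Matrix (Fin r) (Fin r) ℂ} (hTpos : IsPositiveMatrixMap T)
    (hTtr : IsTracePreservingMap T) {A : Matrix (Fin n) (Fin n) ℂ} (hA : A.IsHermitian)
    (hA0 : A.trace = 0) : schattenNorm ⊤ (T A) ≤ ∑ i, (hA.eigenvalues i)⁺ := by
  have hdecomp : A⁺ - A⁻ = A := CFC.posPart_sub_negPart A hA.isSelfAdjoint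
  have htrP : A⁺.trace = ((∑ i, (hA.eigenvalues i)⁺ : ℝ) : ℂ) := hA.trace_posPart
  have htrN : A⁻.trace = A⁺.trace := by
    rw [eq_comm, ← sub_eq_zero, ← trace_sub, hdecomp, hA0]
  have hTA : T A = T A⁺ - T A⁻ := by rw [← map_sub, hdecomp]
  rw [hTA]
  exact schattenNorm_top_sub_le_of_trace_eq
    (hTpos _ (CFC.posPart_nonneg A).posSemidef).nonneg
    (hTpos _ (CFC.negPart_nonneg A).posSemidef).nonneg
    ((hTtr _).trans htrP) ((hTtr _).trans (htrN.trans htrP))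

lemma sum_posPart_le_of_sum_eq_zero {x : Fin 3 → ℝ} (hx : ∑ i, x i = 0) {c : ℝ}
    (hc : ∀ i, |x i| ≤ c) : ∑ i, (x i)⁺ ≤ c := by
  rw [Fin.sum_univ_three] at hx ⊢
  have h0 := abs_le.1 (hc 0)
  have h1 := abs_le.1 (hc 1)
  have h2 := abs_le.1 (hc 2)
  simp only [posPart_def, max_def]
  split_ifs <;> linarith

lemma sum_posPart_eigenvalues_le_schattenNorm_top {A : Matrix (Fin 3) (Fin 3) ℂ}
    (hA : A.IsHermitian) (hA0 : A.trace = 0) :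
    ∑ i, (hA.eigenvalues i)⁺ ≤ schattenNorm ⊤ A := by
  have hsum : ∑ i, hA.eigenvalues i = 0 := by
    have h := hA.trace_eq_sum_eigenvalues.symm.trans hA0
    rwa [← RCLike.ofReal_sum, RCLike.ofReal_eq_zero] at h
  rw [hA.schattenNorm_top_eq]
  exact sum_posPart_le_of_sum_eq_zero hsum fun i =>
    le_ciSup (f := fun j => |hA.eigenvalues j|) (Finite.bddAbove_range _) i

/-- **Qutrits, `p = ∞`.** For any positive trace preserving `T : M₃(ℂ) → M₃(ℂ)` and any
traceless Hermitian `A ∈ M₃(ℂ)`, `‖T(A)‖_∞ ≤ ‖A‖_∞`. -/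
theorem qutrit_traceless_contractive_infty
    (T : Matrix (Fin 3) (Fin 3) ℂ →ₗ[ℂ] Matrix (Fin 3) (Fin 3) ℂ)
    (hTpos : IsPositiveMatrixMap T) (hTtr : IsTracePreservingMap T)
    (A : Matrix (Fin 3) (Fin 3) ℂ) (hA : A.IsHermitian) (hA0 : A.trace = 0) :
    schattenNorm ⊤ (T A) ≤ schattenNorm ⊤ A :=
  (schattenNorm_top_map_le_sum_posPart hTpos hTtr hA hA0).trans
    (sum_posPart_eigenvalues_le_schattenNorm_top hA hA0)
end
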